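/- Let m₁, m₂, m₃ be integers with 0 ≤ m₂ < m₃ and 0 < m₁ < 2m₃. Then there exists an open subset U of ℂ², dense in ℂ² and contained in (ℂ \ ℝ) × (ℂ \ ℝ), such that for every (λ, μ) ∈ U the set of triples (a, b, κ) with a, b ∈ ℝ \ {0} and κ ∈ ℂ \ ℝ satisfying (b/a)·(κ − κ̄)^{m₂ − m₁}·(κ² + 1)^{m₃ − m₂} = λ and a·(i − κ)^{m₁}·(i − κ̄)^{m₁} = μ is finite. (Here κ̄ denotes the complex conjugate of κ, i = √−1, and the exponent m₂ − m₁ may be a negative integer, interpreted as an integer power of the nonzero complex number κ − κ̄.) -/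

import Mathlib

/-!
A triple `(a, b, κ)` is determined by `κ`, because `a` and `b / a` enter the equations as
nonzero factors. Put `w = (i - κ)(i - κ̄)` and `c = κ² + 1`. Since `a` and `b / a` are real and
`κ - κ̄` is purely imaginary, the equations force `(w / w̄)^m₁ = μ / μ̄` and
`(c / c̄)^(2(m₃ - m₂)) = (λ / λ̄)²`, so `w / w̄` and `c / c̄` lie in finite sets of roots. Fixing
them fixes the slopes `Re w / Im w` and `Re c / Im c`, i.e. puts `(Re κ, Im κ)` on two conics.
When `λ` is neither real nor imaginary and `μ` is not real, these conics meet in finitely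
many points; these three conditions cut out an open dense subset of `ℂ²`.
-/

open Complex

/-- The set of triples `(a, b, κ)` with `a, b ∈ ℝ \ {0}`, `κ ∈ ℂ \ ℝ`,
satisfying `(b/a)·(κ − κ̄)^{m₂ − m₁}·(κ² + 1)^{m₃ − m₂} = λ` and
`a·(i − κ)^{m₁}·(i − κ̄)^{m₁} = μ`; the possibly negative exponent `m₂ − m₁`
is interpreted as an integer power of the nonzero complex number `κ − κ̄`. -/
def stmt5Set (m₁ m₂ m₃ : ℤ) (lam μ : ℂ) : Set (ℝ × ℝ × ℂ) :=
  {q | q.1 ≠ 0 ∧ q.2.1 ≠ 0 ∧ q.2.2.im ≠ 0 ∧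
    ((q.2.1 : ℂ) / (q.1 : ℂ)) * (q.2.2 - (starRingEnd ℂ) q.2.2) ^ (m₂ - m₁) *
      (q.2.2 ^ 2 + 1) ^ (m₃ - m₂) = lam ∧
    (q.1 : ℂ) * (I - q.2.2) ^ m₁ * (I - (starRingEnd ℂ) q.2.2) ^ m₁ = μ}

open ComplexConjugate Polynomial

theorem finite_setOf_zpow_eq {K : Type*} [Field K] {m : ℤ} (hm : 0 < m) (t : K) :
    {x : K | x ^ m = t}.Finite := by
  classical
  lift m to ℕ using hm.le
  refine (nthRoots m t).toFinset.finite_toSet.subset fun x hx => ?_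
  simpa [mem_nthRoots (by exact_mod_cast hm : 0 < m)] using hx

noncomputable def conjRatio (z : ℂ) : ℂ := z / conj z

theorem conjRatio_mul (z w : ℂ) : conjRatio (z * w) = conjRatio z * conjRatio w := by
  simp only [conjRatio, map_mul, mul_div_mul_comm]

theorem conjRatio_zpow (z : ℂ) (m : ℤ) : conjRatio (z ^ m) = conjRatio z ^ m := by
  simp only [conjRatio, map_zpow₀, div_zpow]

theorem conjRatio_ofReal {r : ℝ} (hr : r ≠ 0) : conjRatio r = 1 := by
  simp [conjRatio, hr]

theorem conjRatio_sub_conj {κ : ℂ} (h : κ.im ≠ 0) : conjRatio (κ - conj κ) = -1 := by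
  have hne : κ - conj κ ≠ 0 := by simp [sub_conj, h]
  have hconj : conj (κ - conj κ) = -(κ - conj κ) := by simp
  rw [conjRatio, hconj, div_neg, div_self hne]

theorem conjRatio_ne_zero {z : ℂ} (hz : z ≠ 0) : conjRatio z ≠ 0 := by
  simp [conjRatio, hz]

theorem conjRatio_ne_one {z : ℂ} (h : z.im ≠ 0) : conjRatio z ≠ 1 := by
  have hz : conj z ≠ 0 := by simpa using fun hz : z = 0 => h (by simp [hz])
  rw [conjRatio, Ne, div_eq_one_iff_eq hz, eq_comm, conj_eq_iff_im]
  exact h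

theorem conjRatio_sq_ne_one {z : ℂ} (hre : z.re ≠ 0) (him : z.im ≠ 0) : conjRatio z ^ 2 ≠ 1 := by
  have hz : conj z ≠ 0 := by simpa using fun hz : z = 0 => him (by simp [hz])
  rw [conjRatio, div_pow, Ne, div_eq_one_iff_eq (pow_ne_zero 2 hz)]
  intro h
  have : (z - conj z) * (z + conj z) = 0 := by linear_combination h
  simp [sub_conj, add_conj, hre, him] at this

theorem im_ne_zero_of_conjRatio_ne {z : ℂ} (h0 : conjRatio z ≠ 0) (h1 : conjRatio z ≠ 1) :
    z.im ≠ 0 := by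
  intro him
  rw [conjRatio, conj_eq_iff_im.2 him] at h0 h1
  exact h1 (div_self (by simpa using h0))

/-- The inverse Cayley transform: `cayleyInv (conjRatio z) = -re z / im z`. -/
noncomputable def cayleyInv (u : ℂ) : ℂ := I * (1 + u) / (1 - u)

theorem cayleyInv_sq_add_one_ne_zero {u : ℂ} (hu0 : u ≠ 0) (hu1 : u ≠ 1) :
    cayleyInv u ^ 2 + 1 ≠ 0 := by
  have h : 1 - u ≠ 0 := sub_ne_zero.2 (Ne.symm hu1)
  have : cayleyInv u ^ 2 + 1 = -4 * u / (1 - u) ^ 2 := by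
    rw [cayleyInv]; field_simp; linear_combination (1 + u) ^ 2 * I_sq
  rw [this]
  exact div_ne_zero (by simpa using hu0) (pow_ne_zero 2 h)

theorem cayleyInv_ne_zero {u : ℂ} (hu : u ^ 2 ≠ 1) : cayleyInv u ≠ 0 := by
  have h1 : 1 - u ≠ 0 := fun h => hu (by linear_combination (-1 - u) * h)
  have h2 : 1 + u ≠ 0 := fun h => hu (by linear_combination (u - 1) * h)
  simp [cayleyInv, h1, h2, I_ne_zero]

theorem ofReal_re_eq_of_conjRatio_ne_one {z : ℂ} (h : conjRatio z ≠ 1) :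
    (z.re : ℂ) = -(cayleyInv (conjRatio z) * z.im) := by
  rcases eq_or_ne z 0 with rfl | hz
  · simp
  have him : z.im ≠ 0 := im_ne_zero_of_conjRatio_ne (conjRatio_ne_zero hz) h
  have hc : conj z ≠ 0 := by simpa using hz
  have hd : conj z - z ≠ 0 := by
    rw [← neg_sub, neg_ne_zero, sub_conj]; simp [him, I_ne_zero]
  have : cayleyInv (conjRatio z) = I * (conj z + z) / (conj z - z) := by
    rw [cayleyInv, conjRatio, one_add_div hc, one_sub_div hc, mul_div_assoc,
      div_div_div_cancel_right₀ hc, mul_div_assoc]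
  have him' : (z.im : ℂ) ≠ 0 := by exact_mod_cast him
  rw [this, add_comm, add_conj, ← neg_sub, sub_conj]
  field_simp
  push_cast
  ring

theorem quadratic_ne_zero {R : Type*} [Semiring R] {a b c : R} (h : a ≠ 0 ∨ c ≠ 0) :
    C a * X ^ 2 + C b * X + C c ≠ 0 := by
  intro hP
  rcases h with ha | hc
  · exact ha (by simpa [coeff_X, coeff_C] using congrArg (coeff · 2) hP)
  · exact hc (by simpa [coeff_X, coeff_C] using congrArg (coeff · 0) hP)

theorem finite_setOf_conics {p q : ℂ} (hp : p ^ 2 + 1 ≠ 0) (hq : q ≠ 0) :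
    {κ : ℂ | κ.re ≠ 0 ∧ (κ.re ^ 2 + κ.im ^ 2 - 1 : ℂ) = 2 * p * κ.re ∧
      (κ.re ^ 2 - κ.im ^ 2 + 1 : ℂ) = -(2 * q * κ.re * κ.im)}.Finite := by
  set S := {κ : ℂ | κ.re ≠ 0 ∧ (κ.re ^ 2 + κ.im ^ 2 - 1 : ℂ) = 2 * p * κ.re ∧
      (κ.re ^ 2 - κ.im ^ 2 + 1 : ℂ) = -(2 * q * κ.re * κ.im)}
  -- Adding the equations gives `q y = p - x`; substituted into the first, a quadratic in `x`.
  have him : ∀ κ ∈ S, q * κ.im = p - κ.re := by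
    rintro κ ⟨hre, h₁, h₂⟩
    have hre' : (2 * κ.re : ℂ) ≠ 0 := by simpa using hre
    refine mul_left_cancel₀ hre' ?_
    linear_combination h₁ + h₂
  let P : ℂ[X] := C (q ^ 2 + 1) * X ^ 2 + C (-(2 * p * (q ^ 2 + 1))) * X + C (p ^ 2 - q ^ 2)
  have hP : P ≠ 0 := quadratic_ne_zero (by
    by_contra! h
    exact hp (by linear_combination h.1 + h.2))
  have hroot : ∀ κ ∈ S, P.IsRoot κ.re := by
    intro κ hκ
    have h₁ := hκ.2.1
    simp only [P, IsRoot, eval_add, eval_mul, eval_C, eval_pow, eval_X]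
    linear_combination q ^ 2 * h₁ - (q * κ.im + p - κ.re) * him κ hκ
  refine Set.Finite.of_finite_image (f := fun κ : ℂ => (κ.re : ℂ))
    ((finite_setOfPred_isRoot hP).subset ?_) ?_
  · rintro _ ⟨κ, hκ, rfl⟩
    exact hroot κ hκ
  · intro κ₁ h₁ κ₂ h₂ hre
    have hre : κ₁.re = κ₂.re := ofReal_injective hre
    have : (κ₁.im : ℂ) = κ₂.im := mul_left_cancel₀ hq (by rw [him κ₁ h₁, him κ₂ h₂, hre])
    exact Complex.ext hre (ofReal_injective this)

theorem finite_setOf_conjRatio_eq {u v : ℂ} (hu0 : u ≠ 0) (hu1 : u ≠ 1) (hv : v ^ 2 ≠ 1) :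
    {κ : ℂ | conjRatio ((I - κ) * (I - conj κ)) = u ∧ conjRatio (κ ^ 2 + 1) = v}.Finite := by
  refine (finite_setOf_conics (cayleyInv_sq_add_one_ne_zero hu0 hu1)
    (cayleyInv_ne_zero hv)).subset ?_
  rintro κ ⟨rfl, rfl⟩
  have hv1 : conjRatio (κ ^ 2 + 1) ≠ 1 := by rintro h; simp [h] at hv
  have hw := ofReal_re_eq_of_conjRatio_ne_one hu1
  have hc := ofReal_re_eq_of_conjRatio_ne_one hv1
  have hwim := im_ne_zero_of_conjRatio_ne hu0 hu1
  have hw_re : ((I - κ) * (I - conj κ)).re = κ.re ^ 2 + κ.im ^ 2 - 1 := by simp; ring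
  have hw_im : ((I - κ) * (I - conj κ)).im = -(2 * κ.re) := by simp; ring
  have hc_re : (κ ^ 2 + 1).re = κ.re ^ 2 - κ.im ^ 2 + 1 := by simp [pow_two]
  have hc_im : (κ ^ 2 + 1).im = 2 * κ.re * κ.im := by simp [pow_two]; ring
  rw [hw_re, hw_im] at hw
  rw [hc_re, hc_im] at hc
  rw [hw_im] at hwim
  refine ⟨fun h => hwim (by simp [h]), ?_, ?_⟩
  · push_cast at hw; linear_combination hw
  · push_cast at hc; linear_combination hc

section stmt5Set

variable {m₁ m₂ m₃ : ℤ} {lam μ : ℂ}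

theorem conjRatio_zpow_eq_of_mem_stmt5Set {a b : ℝ} {κ : ℂ}
    (h : (a, b, κ) ∈ stmt5Set m₁ m₂ m₃ lam μ) :
    conjRatio ((I - κ) * (I - conj κ)) ^ m₁ = conjRatio μ ∧
      conjRatio (κ ^ 2 + 1) ^ (2 * (m₃ - m₂)) = conjRatio lam ^ 2 := by
  obtain ⟨ha, hb, hκ, hlam, hμ⟩ := h
  have hsign : ((-1 : ℂ) ^ (m₂ - m₁)) ^ 2 = 1 := by
    rw [← zpow_natCast, ← zpow_mul, mul_comm, zpow_mul]; norm_num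
  dsimp only at ha hb hκ hlam hμ
  refine ⟨?_, ?_⟩
  · simp only [← hμ, conjRatio_mul, conjRatio_zpow, conjRatio_ofReal ha, one_mul, mul_zpow]
  · simp only [← hlam, ← ofReal_div, conjRatio_mul, conjRatio_zpow,
      conjRatio_ofReal (div_ne_zero hb ha), conjRatio_sub_conj hκ, one_mul, mul_pow, hsign]
    rw [mul_comm, zpow_mul, zpow_ofNat]

theorem injOn_stmt5Set (hlam : lam ≠ 0) (hμ : μ ≠ 0) :
    Set.InjOn (fun q : ℝ × ℝ × ℂ => q.2.2) (stmt5Set m₁ m₂ m₃ lam μ) := by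
  rintro ⟨a₁, b₁, κ⟩ ⟨ha₁, -, -, hlam₁, hμ₁⟩ ⟨a₂, b₂, κ'⟩ ⟨-, -, -, hlam₂, hμ₂⟩ (rfl : κ = κ')
  simp only [mul_assoc] at hlam₁ hlam₂ hμ₁ hμ₂
  have ha : a₁ = a₂ := ofReal_injective <|
    mul_right_cancel₀ (right_ne_zero_of_mul (hμ₁ ▸ hμ)) (hμ₁.trans hμ₂.symm)
  subst ha
  have hb := mul_right_cancel₀ (right_ne_zero_of_mul (hlam₁ ▸ hlam)) (hlam₁.trans hlam₂.symm)
  rw [div_left_inj' (by exact_mod_cast ha₁), ofReal_inj] at hb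
  rw [hb]

theorem stmt5Set_finite (h₂₃ : m₂ < m₃) (h₁ : 0 < m₁) (hlam_re : lam.re ≠ 0)
    (hlam_im : lam.im ≠ 0) (hμ_im : μ.im ≠ 0) : (stmt5Set m₁ m₂ m₃ lam μ).Finite := by
  have hlam₀ : lam ≠ 0 := fun h => hlam_im (by simp [h])
  have hμ₀ : μ ≠ 0 := fun h => hμ_im (by simp [h])
  have hfib : (⋃ u ∈ {u : ℂ | u ^ m₁ = conjRatio μ},
      ⋃ v ∈ {v : ℂ | v ^ (2 * (m₃ - m₂)) = conjRatio lam ^ 2},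
        {κ : ℂ | conjRatio ((I - κ) * (I - conj κ)) = u ∧ conjRatio (κ ^ 2 + 1) = v}).Finite := by
    refine (finite_setOf_zpow_eq h₁ _).biUnion fun u hu => ?_
    refine (finite_setOf_zpow_eq (by omega) _).biUnion fun v hv => ?_
    refine finite_setOf_conjRatio_eq ?_ ?_ ?_
    · rintro rfl
      exact conjRatio_ne_zero hμ₀ (by rw [← hu.out, zero_zpow _ h₁.ne'])
    · rintro rfl
      exact conjRatio_ne_one hμ_im (by rw [← hu.out, one_zpow])
    · intro hv1
      apply conjRatio_sq_ne_one hlam_re hlam_im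
      rw [← hv.out, zpow_mul, zpow_ofNat, hv1, one_zpow]
  refine Set.Finite.of_finite_image (hfib.subset ?_) (injOn_stmt5Set hlam₀ hμ₀)
  rintro _ ⟨⟨a, b, κ⟩, hq, rfl⟩
  obtain ⟨hu, hv⟩ := conjRatio_zpow_eq_of_mem_stmt5Set hq
  exact Set.mem_biUnion hu (Set.mem_biUnion hv ⟨rfl, rfl⟩)

end stmt5Set

theorem dense_setOf_re_ne_zero : Dense {z : ℂ | z.re ≠ 0} :=
  (dense_compl_singleton 0).preimage isOpenMap_re

theorem dense_setOf_im_ne_zero : Dense {z : ℂ | z.im ≠ 0} :=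
  (dense_compl_singleton 0).preimage isOpenMap_im

theorem stmt5_finite_general (m₁ m₂ m₃ : ℤ)
    (h₂₃ : m₂ < m₃) (h₁ : 0 < m₁) :
    ∃ U : Set (ℂ × ℂ), IsOpen U ∧ Dense U ∧
      (∀ p ∈ U, p.1.im ≠ 0 ∧ p.2.im ≠ 0) ∧
      ∀ p ∈ U, (stmt5Set m₁ m₂ m₃ p.1 p.2).Finite := by
  have hre : IsOpen {z : ℂ | z.re ≠ 0} := isOpen_ne_fun continuous_re continuous_const
  have him : IsOpen {z : ℂ | z.im ≠ 0} := isOpen_ne_fun continuous_im continuous_const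
  refine ⟨({z : ℂ | z.re ≠ 0} ∩ {z : ℂ | z.im ≠ 0}) ×ˢ {z : ℂ | z.im ≠ 0},
    (hre.inter him).prod him,
    (dense_setOf_re_ne_zero.inter_of_isOpen_left dense_setOf_im_ne_zero hre).prod
      dense_setOf_im_ne_zero, fun p hp => ⟨hp.1.2, hp.2⟩,
    fun p hp => stmt5Set_finite h₂₃ h₁ hp.1.1 hp.1.2 hp.2⟩

/-- Let `m₁, m₂, m₃` be integers with `0 ≤ m₂ < m₃` and `0 < m₁ < 2m₃`. Then
there is an open dense subset `U` of `ℂ²`, contained in `(ℂ \ ℝ) × (ℂ \ ℝ)`,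
such that for every `(λ, μ) ∈ U` the set of triples `(a, b, κ)` with
`a, b ∈ ℝ*`, `κ ∈ ℂ \ ℝ`, `(b/a)·(κ − κ̄)^{m₂ − m₁}·(κ² + 1)^{m₃ − m₂} = λ`
and `a·(i − κ)^{m₁}·(i − κ̄)^{m₁} = μ` is finite. -/
theorem stmt5_finite (m₁ m₂ m₃ : ℤ)
    (h₂ : 0 ≤ m₂) (h₂₃ : m₂ < m₃) (h₁ : 0 < m₁) (h₁₃ : m₁ < 2 * m₃) :
    ∃ U : Set (ℂ × ℂ), IsOpen U ∧ Dense U ∧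
      (∀ p ∈ U, p.1.im ≠ 0 ∧ p.2.im ≠ 0) ∧
      ∀ p ∈ U, (stmt5Set m₁ m₂ m₃ p.1 p.2).Finite :=
  stmt5_finite_general m₁ m₂ m₃ h₂₃ h₁
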